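/- Let q be a nonzero real number and ℓ a complex number with |ℓ| = 1. Then: (i) there exists a unique star structure ★ₑ on the complex q-linked Minkowski algebra M^{ℓ,q} with t₁₁^{★ₑ} = −q⁻¹ℓ·t₂₂, t₁₂^{★ₑ} = t₂₁, t₂₁^{★ₑ} = t₁₂, t₂₂^{★ₑ} = −qℓ·t₁₁; (ii) there exists a unique star structure ★ₑ⊕★ₑ on the q-linked complex Lorentz algebra L_{q,ℓ} with a ↦ d, b ↦ −q⁻¹c, c ↦ −qb, d ↦ a, a' ↦ d', b' ↦ −q⁻¹c', c' ↦ −qb', d' ↦ a'; (iii) the coaction ρ intertwines these star structures: ρ ∘ ★ₑ = ((★ₑ⊕★ₑ) ⊗ ★ₑ) ∘ ρ. (Thus the real q-linked Euclidean space is a quantum homogeneous space for the deformed Euclidean group SO_q^{ℓ}(4).) -/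

import Mathlib

noncomputable section

open FreeAlgebra
open scoped TensorProduct

/-- The relations of the q-linked complex Lorentz algebra `L_{q,ℓ}`: generators
`a = ι ℂ 0, b = ι ℂ 1, c = ι ℂ 2, d = ι ℂ 3` and `a' = ι ℂ 4, b' = ι ℂ 5,
c' = ι ℂ 6, d' = ι ℂ 7`, Manin relations with parameter `q` in both sectors, the
link relations, the commutation relations, and the determinant relations. -/
inductive LRel (q ℓ : ℂ) : FreeAlgebra ℂ (Fin 8) → FreeAlgebra ℂ (Fin 8) → Prop
  | ab : LRel q ℓ (ι ℂ 0 * ι ℂ 1) (q⁻¹ • (ι ℂ 1 * ι ℂ 0))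
  | ac : LRel q ℓ (ι ℂ 0 * ι ℂ 2) (q⁻¹ • (ι ℂ 2 * ι ℂ 0))
  | bd : LRel q ℓ (ι ℂ 1 * ι ℂ 3) (q⁻¹ • (ι ℂ 3 * ι ℂ 1))
  | cd : LRel q ℓ (ι ℂ 2 * ι ℂ 3) (q⁻¹ • (ι ℂ 3 * ι ℂ 2))
  | bc : LRel q ℓ (ι ℂ 1 * ι ℂ 2) (ι ℂ 2 * ι ℂ 1)
  | ad : LRel q ℓ (ι ℂ 0 * ι ℂ 3 - ι ℂ 3 * ι ℂ 0) ((q⁻¹ - q) • (ι ℂ 1 * ι ℂ 2))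
  | ab' : LRel q ℓ (ι ℂ 4 * ι ℂ 5) (q⁻¹ • (ι ℂ 5 * ι ℂ 4))
  | ac' : LRel q ℓ (ι ℂ 4 * ι ℂ 6) (q⁻¹ • (ι ℂ 6 * ι ℂ 4))
  | bd' : LRel q ℓ (ι ℂ 5 * ι ℂ 7) (q⁻¹ • (ι ℂ 7 * ι ℂ 5))
  | cd' : LRel q ℓ (ι ℂ 6 * ι ℂ 7) (q⁻¹ • (ι ℂ 7 * ι ℂ 6))
  | bc' : LRel q ℓ (ι ℂ 5 * ι ℂ 6) (ι ℂ 6 * ι ℂ 5)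
  | ad' : LRel q ℓ (ι ℂ 4 * ι ℂ 7 - ι ℂ 7 * ι ℂ 4) ((q⁻¹ - q) • (ι ℂ 5 * ι ℂ 6))
  | link₁ : LRel q ℓ (ι ℂ 5 * ι ℂ 0) (ℓ • (ι ℂ 0 * ι ℂ 5))
  | link₂ : LRel q ℓ (ι ℂ 0 * ι ℂ 6) (ℓ • (ι ℂ 6 * ι ℂ 0))
  | link₃ : LRel q ℓ (ι ℂ 4 * ι ℂ 1) (ℓ • (ι ℂ 1 * ι ℂ 4))
  | link₄ : LRel q ℓ (ι ℂ 1 * ι ℂ 7) (ℓ • (ι ℂ 7 * ι ℂ 1))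
  | link₅ : LRel q ℓ (ι ℂ 2 * ι ℂ 4) (ℓ • (ι ℂ 4 * ι ℂ 2))
  | link₆ : LRel q ℓ (ι ℂ 7 * ι ℂ 2) (ℓ • (ι ℂ 2 * ι ℂ 7))
  | link₇ : LRel q ℓ (ι ℂ 3 * ι ℂ 5) (ℓ • (ι ℂ 5 * ι ℂ 3))
  | link₈ : LRel q ℓ (ι ℂ 6 * ι ℂ 3) (ℓ • (ι ℂ 3 * ι ℂ 6))
  | comm₁ : LRel q ℓ (ι ℂ 0 * ι ℂ 4) (ι ℂ 4 * ι ℂ 0)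
  | comm₂ : LRel q ℓ (ι ℂ 0 * ι ℂ 7) (ι ℂ 7 * ι ℂ 0)
  | comm₃ : LRel q ℓ (ι ℂ 1 * ι ℂ 5) (ι ℂ 5 * ι ℂ 1)
  | comm₄ : LRel q ℓ (ι ℂ 1 * ι ℂ 6) (ι ℂ 6 * ι ℂ 1)
  | comm₅ : LRel q ℓ (ι ℂ 2 * ι ℂ 5) (ι ℂ 5 * ι ℂ 2)
  | comm₆ : LRel q ℓ (ι ℂ 2 * ι ℂ 6) (ι ℂ 6 * ι ℂ 2)
  | comm₇ : LRel q ℓ (ι ℂ 3 * ι ℂ 4) (ι ℂ 4 * ι ℂ 3)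
  | comm₈ : LRel q ℓ (ι ℂ 3 * ι ℂ 7) (ι ℂ 7 * ι ℂ 3)
  | det : LRel q ℓ (ι ℂ 0 * ι ℂ 3 - q⁻¹ • (ι ℂ 1 * ι ℂ 2)) 1
  | det' : LRel q ℓ (ι ℂ 4 * ι ℂ 7 - q⁻¹ • (ι ℂ 5 * ι ℂ 6)) 1

/-- The q-linked complex Lorentz algebra `L_{q,ℓ}`. -/
abbrev LAlg (q ℓ : ℂ) := RingQuot (LRel q ℓ)

/-- The images of the eight generators of `L_{q,ℓ}`. -/
def lgen (q ℓ : ℂ) (i : Fin 8) : LAlg q ℓ :=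
  RingQuot.mkAlgHom ℂ (LRel q ℓ) (ι ℂ i)

/-- The relations of the complex q-linked Minkowski algebra `M^{ℓ,q}`, with
generators `t₁₁ = ι ℂ 0`, `t₁₂ = ι ℂ 1`, `t₂₁ = ι ℂ 2`, `t₂₂ = ι ℂ 3`. -/
inductive MRel (q ℓ : ℂ) : FreeAlgebra ℂ (Fin 4) → FreeAlgebra ℂ (Fin 4) → Prop
  | r₁ : MRel q ℓ (ι ℂ 0 * ι ℂ 1) ((q * ℓ) • (ι ℂ 1 * ι ℂ 0))
  | r₂ : MRel q ℓ (ι ℂ 1 * ι ℂ 3) ((q⁻¹ * ℓ) • (ι ℂ 3 * ι ℂ 1))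
  | r₃ : MRel q ℓ (ι ℂ 0 * ι ℂ 2) ((q⁻¹ * ℓ⁻¹) • (ι ℂ 2 * ι ℂ 0))
  | r₄ : MRel q ℓ (ι ℂ 2 * ι ℂ 3) ((q * ℓ⁻¹) • (ι ℂ 3 * ι ℂ 2))
  | r₅ : MRel q ℓ (ι ℂ 0 * ι ℂ 3) (ι ℂ 3 * ι ℂ 0)
  | r₆ : MRel q ℓ (ι ℂ 1 * ι ℂ 2) (ι ℂ 2 * ι ℂ 1 + (ℓ * (q⁻¹ - q)) • (ι ℂ 0 * ι ℂ 3))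

/-- The complex q-linked Minkowski algebra `M^{ℓ,q}`. -/
abbrev MAlg (q ℓ : ℂ) := RingQuot (MRel q ℓ)

/-- The images of the generators `t₁₁, t₁₂, t₂₁, t₂₂` of `M^{ℓ,q}`. -/
def tgen (q ℓ : ℂ) (i : Fin 4) : MAlg q ℓ :=
  RingQuot.mkAlgHom ℂ (MRel q ℓ) (ι ℂ i)

/-- The matrix `(t_{ij})` of generators of `M^{ℓ,q}`. -/
def tmat (q ℓ : ℂ) : Fin 2 → Fin 2 → MAlg q ℓ :=
  ![![tgen q ℓ 0, tgen q ℓ 1], ![tgen q ℓ 2, tgen q ℓ 3]]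

/-- The quantum metric `Q_{ℓ/q} = t₁₂ t₂₁ − q⁻¹ℓ · t₁₁ t₂₂`. -/
def Qmetric (q ℓ : ℂ) : MAlg q ℓ :=
  tgen q ℓ 1 * tgen q ℓ 2 - (q⁻¹ * ℓ) • (tgen q ℓ 0 * tgen q ℓ 3)

/-- The antichiral matrix `(y_{ij}) = (a' b'; c' d')` of `L_{q,ℓ}`. -/
def ymat (q ℓ : ℂ) : Fin 2 → Fin 2 → LAlg q ℓ :=
  ![![lgen q ℓ 4, lgen q ℓ 5], ![lgen q ℓ 6, lgen q ℓ 7]]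

/-- The entrywise antipode `(σ_{ij}) = (d −qb; −q⁻¹c a)` of the chiral matrix of
`L_{q,ℓ}`. -/
def σmat (q ℓ : ℂ) : Fin 2 → Fin 2 → LAlg q ℓ :=
  ![![lgen q ℓ 3, (-q) • lgen q ℓ 1], ![(-q⁻¹) • lgen q ℓ 2, lgen q ℓ 0]]

/-- `ρ` is the coaction of `L_{q,ℓ}` on `M^{ℓ,q}`:
`ρ(t_{ij}) = Σ_{s,r} y_{is} σ_{rj} ⊗ t_{sr}`. -/
def IsCoaction (q ℓ : ℂ) (ρ : MAlg q ℓ →ₐ[ℂ] (LAlg q ℓ ⊗[ℂ] MAlg q ℓ)) : Prop :=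
  ∀ i j : Fin 2, ρ (tmat q ℓ i j) =
    ∑ s : Fin 2, ∑ r : Fin 2, (ymat q ℓ i s * σmat q ℓ r j) ⊗ₜ[ℂ] tmat q ℓ s r

/-- A star structure on a complex algebra: additive, conjugate-linear,
antimultiplicative, unital, involutive. -/
def IsStar {A : Type*} [Ring A] [Algebra ℂ A] (st : A → A) : Prop :=
  (∀ x y : A, st (x + y) = st x + st y) ∧
  (∀ (z : ℂ) (x : A), st (z • x) = (starRingEnd ℂ) z • st x) ∧
  (∀ x y : A, st (x * y) = st y * st x) ∧
  st 1 = 1 ∧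
  (∀ x : A, st (st x) = x)

/-- The prescribed values of the star structure on the Minkowski generators. -/
def MStarVals (q ℓ : ℂ) (st : MAlg q ℓ → MAlg q ℓ) : Prop :=
  st (tgen q ℓ 0) = (-(q⁻¹ * ℓ)) • tgen q ℓ 3 ∧ st (tgen q ℓ 1) = tgen q ℓ 2 ∧
  st (tgen q ℓ 2) = tgen q ℓ 1 ∧ st (tgen q ℓ 3) = (-(q * ℓ)) • tgen q ℓ 0

/-- The prescribed values of the star structure on the generators of `L_{q,ℓ}`. -/
def LStarVals (q ℓ : ℂ) (st : LAlg q ℓ → LAlg q ℓ) : Prop :=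
  st (lgen q ℓ 0) = lgen q ℓ 3 ∧ st (lgen q ℓ 1) = (-q⁻¹) • lgen q ℓ 2 ∧
  st (lgen q ℓ 2) = (-q) • lgen q ℓ 1 ∧ st (lgen q ℓ 3) = lgen q ℓ 0 ∧
  st (lgen q ℓ 4) = lgen q ℓ 7 ∧ st (lgen q ℓ 5) = (-q⁻¹) • lgen q ℓ 6 ∧
  st (lgen q ℓ 6) = (-q) • lgen q ℓ 5 ∧ st (lgen q ℓ 7) = lgen q ℓ 4

/-!
A conjugate-linear antimultiplicative map out of a quotient of a free algebra is determined by its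
values on the generators, and one with prescribed values exists as soon as these values respect
the defining relations; it is involutive as soon as it is so on the generators. For `M^{ℓ,q}` and
`L_{q,ℓ}` the relations are checked by rewriting to a normal order, using `q̄ = q` and `ℓ̄ = ℓ⁻¹`.
For (iii), both `ρ ∘ ★ₑ` and `((★ₑ⊕★ₑ) ⊗ ★ₑ) ∘ ρ` are conjugate-linear antihomomorphisms, so it
suffices to compare them on the four generators `t_ij`; there the comparison is again a
normal-ordering computation, now moving antichiral generators to the left of chiral ones.
-/

open MulOpposite ComplexConjugate

structure IsConjAntiHom {A B : Type*} [Semiring A] [Algebra ℂ A] [Semiring B] [Algebra ℂ B]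
    (f : A → B) : Prop where
  map_add : ∀ x y, f (x + y) = f x + f y
  map_smul : ∀ (z : ℂ) x, f (z • x) = conj z • f x
  map_mul : ∀ x y, f (x * y) = f y * f x
  map_one : f 1 = 1

namespace IsConjAntiHom

variable {A B C : Type*} [Semiring A] [Algebra ℂ A] [Semiring B] [Algebra ℂ B] [Semiring C]
  [Algebra ℂ C]

theorem map_algebraMap {f : A → B} (hf : IsConjAntiHom f) (z : ℂ) :
    f (algebraMap ℂ A z) = algebraMap ℂ B (conj z) := by
  rw [Algebra.algebraMap_eq_smul_one, hf.map_smul, hf.map_one, Algebra.algebraMap_eq_smul_one]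

theorem comp_algHom {f : B → C} (hf : IsConjAntiHom f) (φ : A →ₐ[ℂ] B) :
    IsConjAntiHom (f ∘ φ) where
  map_add x y := by simp [hf.map_add]
  map_smul z x := by simp [hf.map_smul]
  map_mul x y := by simp [hf.map_mul]
  map_one := by simp [hf.map_one]

theorem algHom_comp {f : A → B} (hf : IsConjAntiHom f) (φ : B →ₐ[ℂ] C) :
    IsConjAntiHom (φ ∘ f) where
  map_add x y := by simp [hf.map_add]
  map_smul z x := by simp [hf.map_smul]
  map_mul x y := by simp [hf.map_mul]
  map_one := by simp [hf.map_one]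

def toStarLinearMap {f : A → B} (hf : IsConjAntiHom f) : A →ₗ⋆[ℂ] B where
  toFun := f
  map_add' := hf.map_add
  map_smul' := hf.map_smul

@[simp]
theorem coe_toStarLinearMap {f : A → B} (hf : IsConjAntiHom f) : ⇑hf.toStarLinearMap = f := rfl

theorem tensorMap {A' B' : Type*} [Semiring A'] [Algebra ℂ A'] [Semiring B'] [Algebra ℂ B']
    {f : A → A'} {g : B → B'} (hf : IsConjAntiHom f) (hg : IsConjAntiHom g) :
    IsConjAntiHom (TensorProduct.map hf.toStarLinearMap hg.toStarLinearMap) where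
  map_add x y := _root_.map_add _ x y
  map_smul z x := LinearMap.map_smulₛₗ _ z x
  map_mul u v := by
    induction u using TensorProduct.induction_on with
    | zero => simp
    | add u₁ u₂ h₁ h₂ => simp only [add_mul, mul_add, LinearMap.map_add, h₁, h₂]
    | tmul x y =>
      induction v using TensorProduct.induction_on with
      | zero => simp
      | add v₁ v₂ h₁ h₂ => simp only [add_mul, mul_add, LinearMap.map_add, h₁, h₂]
      | tmul x' y' =>
        simp [hf.map_mul, hg.map_mul]
  map_one := by
    simp [Algebra.TensorProduct.one_def, hf.map_one, hg.map_one]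

end IsConjAntiHom

theorem IsStar.isConjAntiHom {A : Type*} [Ring A] [Algebra ℂ A] {st : A → A} (h : IsStar st) :
    IsConjAntiHom st :=
  ⟨h.1, h.2.1, h.2.2.1, h.2.2.2.1⟩

namespace FreeAlgebra

variable {X A : Type*} [Semiring A] [Algebra ℂ A]

/- `FreeAlgebra.lift` only yields `ℂ`-linear maps; going through the monoid algebra lets the
scalars be twisted by complex conjugation. -/
def conjAntiLift (v : X → A) : FreeAlgebra ℂ X →+* Aᵐᵒᵖ :=
  (MonoidAlgebra.liftNCRingHom ((algebraMap ℂ Aᵐᵒᵖ).comp (starRingEnd ℂ))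
    (FreeMonoid.lift fun x => op (v x)) fun z m =>
      Algebra.commute_algebraMap_left (conj z) ((FreeMonoid.lift fun x => op (v x)) m)).comp
    (equivMonoidAlgebraFreeMonoid (R := ℂ) (X := X)).toRingEquiv.toRingHom

variable (v : X → A)

@[simp]
theorem conjAntiLift_ι (x : X) : conjAntiLift v (ι ℂ x) = op (v x) := by
  simp [conjAntiLift, equivMonoidAlgebraFreeMonoid]

@[simp]
theorem conjAntiLift_smul (z : ℂ) (a : FreeAlgebra ℂ X) :
    conjAntiLift v (z • a) = conj z • conjAntiLift v a := by
  simp [conjAntiLift, Algebra.smul_def, MonoidAlgebra.liftNCRingHom_single]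

end FreeAlgebra

namespace RingQuot

variable {X : Type*} {rel : FreeAlgebra ℂ X → FreeAlgebra ℂ X → Prop}

theorem induction_ι {P : RingQuot rel → Prop}
    (algebraMap : ∀ z : ℂ, P (algebraMap ℂ _ z))
    (ι : ∀ x, P (mkAlgHom ℂ rel (FreeAlgebra.ι ℂ x)))
    (add : ∀ a b, P a → P b → P (a + b))
    (mul : ∀ a b, P a → P b → P (a * b)) (a : RingQuot rel) : P a := by
  obtain ⟨a, rfl⟩ := mkAlgHom_surjective ℂ rel a
  induction a using FreeAlgebra.induction with
  | grade0 z => rw [AlgHom.commutes]; exact algebraMap z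
  | grade1 x => exact ι x
  | mul a b ha hb => rw [map_mul]; exact mul _ _ ha hb
  | add a b ha hb => rw [map_add]; exact add _ _ ha hb

theorem conjAntiHom_ext {B : Type*} [Semiring B] [Algebra ℂ B] {f g : RingQuot rel → B}
    (hf : IsConjAntiHom f) (hg : IsConjAntiHom g)
    (h : ∀ x, f (mkAlgHom ℂ rel (FreeAlgebra.ι ℂ x)) = g (mkAlgHom ℂ rel (FreeAlgebra.ι ℂ x))) :
    f = g := by
  funext a
  induction a using induction_ι with
  | algebraMap z => rw [hf.map_algebraMap, hg.map_algebraMap]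
  | ι x => exact h x
  | add a b ha hb => rw [hf.map_add, hg.map_add, ha, hb]
  | mul a b ha hb => rw [hf.map_mul, hg.map_mul, ha, hb]

variable (v : X → RingQuot rel)
  (hv : ∀ ⦃a b⦄, rel a b → FreeAlgebra.conjAntiLift v a = FreeAlgebra.conjAntiLift v b)

def conjAntiEnd : RingQuot rel → RingQuot rel :=
  fun a => (lift ⟨FreeAlgebra.conjAntiLift v, hv⟩ a).unop

theorem conjAntiEnd_mk (a : FreeAlgebra ℂ X) :
    conjAntiEnd v hv (mkAlgHom ℂ rel a) = (FreeAlgebra.conjAntiLift v a).unop := by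
  have hmk : mkAlgHom ℂ rel a = mkRingHom rel a := RingHom.congr_fun (mkAlgHom_coe ℂ rel) a
  rw [conjAntiEnd, hmk, lift_mkRingHom_apply]

theorem conjAntiEnd_ι (x : X) : conjAntiEnd v hv (mkAlgHom ℂ rel (FreeAlgebra.ι ℂ x)) = v x := by
  rw [conjAntiEnd_mk, FreeAlgebra.conjAntiLift_ι, unop_op]

theorem isConjAntiHom_conjAntiEnd : IsConjAntiHom (conjAntiEnd v hv) where
  map_add a b := by simp [conjAntiEnd]
  map_smul z a := by
    obtain ⟨a, rfl⟩ := mkAlgHom_surjective ℂ rel a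
    rw [← map_smul, conjAntiEnd_mk, conjAntiEnd_mk, FreeAlgebra.conjAntiLift_smul, unop_smul]
  map_mul a b := by simp [conjAntiEnd]
  map_one := by simp [conjAntiEnd]

theorem isStar_conjAntiEnd
    (hinv : ∀ x, conjAntiEnd v hv (v x) = mkAlgHom ℂ rel (FreeAlgebra.ι ℂ x)) :
    IsStar (conjAntiEnd v hv) := by
  have h := isConjAntiHom_conjAntiEnd v hv
  refine ⟨h.map_add, h.map_smul, h.map_mul, h.map_one, fun a => ?_⟩
  induction a using induction_ι with
  | algebraMap z => rw [h.map_algebraMap, h.map_algebraMap, Complex.conj_conj]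
  | ι x => rw [conjAntiEnd_ι, hinv]
  | add a b ha hb => rw [h.map_add, h.map_add, ha, hb]
  | mul a b ha hb => rw [h.map_mul, h.map_mul, ha, hb]

theorem existsUnique_isStar
    (hinv : ∀ x, conjAntiEnd v hv (v x) = mkAlgHom ℂ rel (FreeAlgebra.ι ℂ x)) :
    ∃! st : RingQuot rel → RingQuot rel,
      IsStar st ∧ ∀ x, st (mkAlgHom ℂ rel (FreeAlgebra.ι ℂ x)) = v x :=
  ⟨conjAntiEnd v hv, ⟨isStar_conjAntiEnd v hv hinv, conjAntiEnd_ι v hv⟩,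
    fun _ ⟨hst, hst_ι⟩ => conjAntiHom_ext hst.isConjAntiHom (isConjAntiHom_conjAntiEnd v hv)
      fun x => by rw [hst_ι, conjAntiEnd_ι]⟩

end RingQuot

/- The defining relations are oriented as `simp` rewrite rules towards the normal order of
decreasing generator index, with `d a` and `d' a'` moreover eliminated through the determinant
relations. `simp` then brings every quadratic expression to normal form, which turns each
compatibility check below into an identity between scalar coefficients. -/

namespace MAlg

variable {q ℓ : ℂ}

local notation "𝐭₁₁" => tgen q ℓ 0
local notation "𝐭₁₂" => tgen q ℓ 1
local notation "𝐭₂₁" => tgen q ℓ 2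
local notation "𝐭₂₂" => tgen q ℓ 3

theorem mk_eq_mk_of_rel {a b : FreeAlgebra ℂ (Fin 4)} (h : MRel q ℓ a b) :
    RingQuot.mkAlgHom ℂ (MRel q ℓ) a = RingQuot.mkAlgHom ℂ (MRel q ℓ) b :=
  RingQuot.mkAlgHom_rel ℂ h

@[simp] theorem t₁₁_mul_t₁₂ : 𝐭₁₁ * 𝐭₁₂ = (q * ℓ) • (𝐭₁₂ * 𝐭₁₁) := by
  simpa [tgen] using mk_eq_mk_of_rel .r₁
@[simp] theorem t₁₂_mul_t₂₂ : 𝐭₁₂ * 𝐭₂₂ = (q⁻¹ * ℓ) • (𝐭₂₂ * 𝐭₁₂) := by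
  simpa [tgen] using mk_eq_mk_of_rel .r₂
@[simp] theorem t₁₁_mul_t₂₁ : 𝐭₁₁ * 𝐭₂₁ = (q⁻¹ * ℓ⁻¹) • (𝐭₂₁ * 𝐭₁₁) := by
  simpa [tgen] using mk_eq_mk_of_rel .r₃
@[simp] theorem t₂₁_mul_t₂₂ : 𝐭₂₁ * 𝐭₂₂ = (q * ℓ⁻¹) • (𝐭₂₂ * 𝐭₂₁) := by
  simpa [tgen] using mk_eq_mk_of_rel .r₄
@[simp] theorem t₁₁_mul_t₂₂ : 𝐭₁₁ * 𝐭₂₂ = 𝐭₂₂ * 𝐭₁₁ := by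
  simpa [tgen] using mk_eq_mk_of_rel .r₅
@[simp] theorem t₁₂_mul_t₂₁ : 𝐭₁₂ * 𝐭₂₁ = 𝐭₂₁ * 𝐭₁₂ + (ℓ * (q⁻¹ - q)) • (𝐭₁₁ * 𝐭₂₂) := by
  simpa [tgen] using mk_eq_mk_of_rel .r₆

variable (q ℓ) in
def euclidStarGen : Fin 4 → MAlg q ℓ :=
  ![(-(q⁻¹ * ℓ)) • 𝐭₂₂, 𝐭₂₁, 𝐭₁₂, (-(q * ℓ)) • 𝐭₁₁]

theorem euclidStarGen_compat (hq : q ≠ 0) (hℓ : ℓ ≠ 0) (hq_real : conj q = q)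
    (hℓ_unit : conj ℓ = ℓ⁻¹) ⦃a b : FreeAlgebra ℂ (Fin 4)⦄ (h : MRel q ℓ a b) :
    FreeAlgebra.conjAntiLift (euclidStarGen q ℓ) a =
      FreeAlgebra.conjAntiLift (euclidStarGen q ℓ) b := by
  apply unop_injective
  cases h <;> simp [euclidStarGen, hq_real, hℓ_unit, smul_smul] <;> match_scalars <;> field_simp

theorem mStarVals_iff {st : MAlg q ℓ → MAlg q ℓ} :
    MStarVals q ℓ st ↔ ∀ i, st (tgen q ℓ i) = euclidStarGen q ℓ i := by
  simp [MStarVals, Fin.forall_fin_succ, euclidStarGen]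

theorem existsUnique_isStar_mStarVals (hq : q ≠ 0) (hℓ : ℓ ≠ 0) (hq_real : conj q = q)
    (hℓ_unit : conj ℓ = ℓ⁻¹) :
    ∃! st : MAlg q ℓ → MAlg q ℓ, IsStar st ∧ MStarVals q ℓ st := by
  have hv := euclidStarGen_compat hq hℓ hq_real hℓ_unit
  set st := RingQuot.conjAntiEnd _ hv
  have hst : IsConjAntiHom st := RingQuot.isConjAntiHom_conjAntiEnd _ hv
  have htgen : ∀ i, st (tgen q ℓ i) = euclidStarGen q ℓ i := RingQuot.conjAntiEnd_ι _ hv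
  have hinv : ∀ i, st (euclidStarGen q ℓ i) = tgen q ℓ i := by
    intro i
    fin_cases i <;> simp [euclidStarGen, hst.map_smul, htgen, hq_real, hℓ_unit, smul_smul] <;>
      match_scalars <;> field_simp
  exact (existsUnique_congr fun st => and_congr_right' mStarVals_iff).2
    (RingQuot.existsUnique_isStar _ hv hinv)

end MAlg

namespace LAlg

variable {q ℓ : ℂ}

local notation "𝐚" => lgen q ℓ 0
local notation "𝐛" => lgen q ℓ 1
local notation "𝐜" => lgen q ℓ 2
local notation "𝐝" => lgen q ℓ 3
local notation "𝐚'" => lgen q ℓ 4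
local notation "𝐛'" => lgen q ℓ 5
local notation "𝐜'" => lgen q ℓ 6
local notation "𝐝'" => lgen q ℓ 7

theorem mk_eq_mk_of_rel {a b : FreeAlgebra ℂ (Fin 8)} (h : LRel q ℓ a b) :
    RingQuot.mkAlgHom ℂ (LRel q ℓ) a = RingQuot.mkAlgHom ℂ (LRel q ℓ) b :=
  RingQuot.mkAlgHom_rel ℂ h

@[simp] theorem a_mul_b : 𝐚 * 𝐛 = q⁻¹ • (𝐛 * 𝐚) := by simpa [lgen] using mk_eq_mk_of_rel .ab
@[simp] theorem a_mul_c : 𝐚 * 𝐜 = q⁻¹ • (𝐜 * 𝐚) := by simpa [lgen] using mk_eq_mk_of_rel .ac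
@[simp] theorem b_mul_d : 𝐛 * 𝐝 = q⁻¹ • (𝐝 * 𝐛) := by simpa [lgen] using mk_eq_mk_of_rel .bd
@[simp] theorem c_mul_d : 𝐜 * 𝐝 = q⁻¹ • (𝐝 * 𝐜) := by simpa [lgen] using mk_eq_mk_of_rel .cd
@[simp] theorem b_mul_c : 𝐛 * 𝐜 = 𝐜 * 𝐛 := by simpa [lgen] using mk_eq_mk_of_rel .bc

@[simp] theorem a_mul_d : 𝐚 * 𝐝 = 1 + q⁻¹ • (𝐜 * 𝐛) := by
  have h : 𝐚 * 𝐝 - q⁻¹ • (𝐛 * 𝐜) = 1 := by simpa [lgen] using mk_eq_mk_of_rel .det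
  rw [← h, b_mul_c, sub_add_cancel]

@[simp] theorem d_mul_a : 𝐝 * 𝐚 = 1 + q • (𝐜 * 𝐛) := by
  have h : 𝐚 * 𝐝 - 𝐝 * 𝐚 = (q⁻¹ - q) • (𝐛 * 𝐜) := by simpa [lgen] using mk_eq_mk_of_rel .ad
  rw [a_mul_d, b_mul_c] at h
  linear_combination (norm := module) -h

@[simp] theorem a'_mul_b' : 𝐚' * 𝐛' = q⁻¹ • (𝐛' * 𝐚') := by simpa [lgen] using mk_eq_mk_of_rel .ab'
@[simp] theorem a'_mul_c' : 𝐚' * 𝐜' = q⁻¹ • (𝐜' * 𝐚') := by simpa [lgen] using mk_eq_mk_of_rel .ac'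
@[simp] theorem b'_mul_d' : 𝐛' * 𝐝' = q⁻¹ • (𝐝' * 𝐛') := by simpa [lgen] using mk_eq_mk_of_rel .bd'
@[simp] theorem c'_mul_d' : 𝐜' * 𝐝' = q⁻¹ • (𝐝' * 𝐜') := by simpa [lgen] using mk_eq_mk_of_rel .cd'
@[simp] theorem b'_mul_c' : 𝐛' * 𝐜' = 𝐜' * 𝐛' := by simpa [lgen] using mk_eq_mk_of_rel .bc'

@[simp] theorem a'_mul_d' : 𝐚' * 𝐝' = 1 + q⁻¹ • (𝐜' * 𝐛') := by
  have h : 𝐚' * 𝐝' - q⁻¹ • (𝐛' * 𝐜') = 1 := by simpa [lgen] using mk_eq_mk_of_rel .det'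
  rw [← h, b'_mul_c', sub_add_cancel]

@[simp] theorem d'_mul_a' : 𝐝' * 𝐚' = 1 + q • (𝐜' * 𝐛') := by
  have h : 𝐚' * 𝐝' - 𝐝' * 𝐚' = (q⁻¹ - q) • (𝐛' * 𝐜') := by simpa [lgen] using mk_eq_mk_of_rel .ad'
  rw [a'_mul_d', b'_mul_c'] at h
  linear_combination (norm := module) -h

@[simp] theorem a_mul_a' : 𝐚 * 𝐚' = 𝐚' * 𝐚 := by simpa [lgen] using mk_eq_mk_of_rel .comm₁
@[simp] theorem a_mul_c' : 𝐚 * 𝐜' = ℓ • (𝐜' * 𝐚) := by simpa [lgen] using mk_eq_mk_of_rel .link₂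
@[simp] theorem a_mul_d' : 𝐚 * 𝐝' = 𝐝' * 𝐚 := by simpa [lgen] using mk_eq_mk_of_rel .comm₂
@[simp] theorem b_mul_b' : 𝐛 * 𝐛' = 𝐛' * 𝐛 := by simpa [lgen] using mk_eq_mk_of_rel .comm₃
@[simp] theorem b_mul_c' : 𝐛 * 𝐜' = 𝐜' * 𝐛 := by simpa [lgen] using mk_eq_mk_of_rel .comm₄
@[simp] theorem b_mul_d' : 𝐛 * 𝐝' = ℓ • (𝐝' * 𝐛) := by simpa [lgen] using mk_eq_mk_of_rel .link₄
@[simp] theorem c_mul_a' : 𝐜 * 𝐚' = ℓ • (𝐚' * 𝐜) := by simpa [lgen] using mk_eq_mk_of_rel .link₅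
@[simp] theorem c_mul_b' : 𝐜 * 𝐛' = 𝐛' * 𝐜 := by simpa [lgen] using mk_eq_mk_of_rel .comm₅
@[simp] theorem c_mul_c' : 𝐜 * 𝐜' = 𝐜' * 𝐜 := by simpa [lgen] using mk_eq_mk_of_rel .comm₆
@[simp] theorem d_mul_a' : 𝐝 * 𝐚' = 𝐚' * 𝐝 := by simpa [lgen] using mk_eq_mk_of_rel .comm₇
@[simp] theorem d_mul_b' : 𝐝 * 𝐛' = ℓ • (𝐛' * 𝐝) := by simpa [lgen] using mk_eq_mk_of_rel .link₇
@[simp] theorem d_mul_d' : 𝐝 * 𝐝' = 𝐝' * 𝐝 := by simpa [lgen] using mk_eq_mk_of_rel .comm₈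

@[simp] theorem a_mul_b' (hℓ : ℓ ≠ 0) : 𝐚 * 𝐛' = ℓ⁻¹ • (𝐛' * 𝐚) :=
  (eq_inv_smul_iff₀ hℓ).2 (by simpa [lgen] using (mk_eq_mk_of_rel .link₁).symm)
@[simp] theorem b_mul_a' (hℓ : ℓ ≠ 0) : 𝐛 * 𝐚' = ℓ⁻¹ • (𝐚' * 𝐛) :=
  (eq_inv_smul_iff₀ hℓ).2 (by simpa [lgen] using (mk_eq_mk_of_rel .link₃).symm)
@[simp] theorem c_mul_d' (hℓ : ℓ ≠ 0) : 𝐜 * 𝐝' = ℓ⁻¹ • (𝐝' * 𝐜) :=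
  (eq_inv_smul_iff₀ hℓ).2 (by simpa [lgen] using (mk_eq_mk_of_rel .link₆).symm)
@[simp] theorem d_mul_c' (hℓ : ℓ ≠ 0) : 𝐝 * 𝐜' = ℓ⁻¹ • (𝐜' * 𝐝) :=
  (eq_inv_smul_iff₀ hℓ).2 (by simpa [lgen] using (mk_eq_mk_of_rel .link₈).symm)

variable (q ℓ) in
def euclidStarGen : Fin 8 → LAlg q ℓ :=
  ![𝐝, (-q⁻¹) • 𝐜, (-q) • 𝐛, 𝐚, 𝐝', (-q⁻¹) • 𝐜', (-q) • 𝐛', 𝐚']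

theorem euclidStarGen_compat (hq : q ≠ 0) (hℓ : ℓ ≠ 0) (hq_real : conj q = q)
    (hℓ_unit : conj ℓ = ℓ⁻¹) ⦃a b : FreeAlgebra ℂ (Fin 8)⦄ (h : LRel q ℓ a b) :
    FreeAlgebra.conjAntiLift (euclidStarGen q ℓ) a =
      FreeAlgebra.conjAntiLift (euclidStarGen q ℓ) b := by
  apply unop_injective
  cases h <;> simp [euclidStarGen, hq_real, hℓ_unit, hℓ, smul_smul] <;>
    match_scalars <;> field_simp <;> ring

theorem lStarVals_iff {st : LAlg q ℓ → LAlg q ℓ} :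
    LStarVals q ℓ st ↔ ∀ i, st (lgen q ℓ i) = euclidStarGen q ℓ i := by
  simp [LStarVals, Fin.forall_fin_succ, euclidStarGen]

theorem existsUnique_isStar_lStarVals (hq : q ≠ 0) (hℓ : ℓ ≠ 0) (hq_real : conj q = q)
    (hℓ_unit : conj ℓ = ℓ⁻¹) :
    ∃! st : LAlg q ℓ → LAlg q ℓ, IsStar st ∧ LStarVals q ℓ st := by
  have hv := euclidStarGen_compat hq hℓ hq_real hℓ_unit
  set st := RingQuot.conjAntiEnd _ hv
  have hst : IsConjAntiHom st := RingQuot.isConjAntiHom_conjAntiEnd _ hv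
  have hlgen : ∀ i, st (lgen q ℓ i) = euclidStarGen q ℓ i := RingQuot.conjAntiEnd_ι _ hv
  have hinv : ∀ i, st (euclidStarGen q ℓ i) = lgen q ℓ i := by
    intro i
    fin_cases i <;> simp [euclidStarGen, hst.map_smul, hlgen, hq_real, smul_smul] <;>
      match_scalars <;> field_simp
  exact (existsUnique_congr fun st => and_congr_right' lStarVals_iff).2
    (RingQuot.existsUnique_isStar _ hv hinv)

end LAlg

section Coaction

variable {q ℓ : ℂ} {stL : LAlg q ℓ → LAlg q ℓ} {stM : MAlg q ℓ → MAlg q ℓ}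

theorem IsCoaction.map_star_tgen (hq : q ≠ 0) (hℓ : ℓ ≠ 0) (hq_real : conj q = q)
    (hL : IsConjAntiHom stL) (hM : IsConjAntiHom stM)
    (hLv : LStarVals q ℓ stL) (hMv : MStarVals q ℓ stM)
    {ρ : MAlg q ℓ →ₐ[ℂ] LAlg q ℓ ⊗[ℂ] MAlg q ℓ} (hρ : IsCoaction q ℓ ρ) (i : Fin 4) :
    ρ (stM (tgen q ℓ i)) =
      TensorProduct.map hL.toStarLinearMap hM.toStarLinearMap (ρ (tgen q ℓ i)) := by
  have h₀ : ρ (tgen q ℓ 0) = _ := hρ 0 0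
  have h₁ : ρ (tgen q ℓ 1) = _ := hρ 0 1
  have h₂ : ρ (tgen q ℓ 2) = _ := hρ 1 0
  have h₃ : ρ (tgen q ℓ 3) = _ := hρ 1 1
  obtain ⟨ha, hb, hc, hd, ha', hb', hc', hd'⟩ := hLv
  obtain ⟨ht₁₁, ht₁₂, ht₂₁, ht₂₂⟩ := hMv
  fin_cases i <;>
    simp [h₀, h₁, h₂, h₃, ymat, σmat, tmat, Fin.sum_univ_two, hL.map_mul, ha, hb, hc, hd, ha', hb',
      hc', hd', ht₁₁, ht₁₂, ht₂₁, ht₂₂, hq_real, hℓ, ← TensorProduct.smul_tmul',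
      TensorProduct.tmul_smul, TensorProduct.neg_tmul, smul_smul] <;>
    match_scalars <;> field_simp

theorem IsCoaction.comp_star (hq : q ≠ 0) (hℓ : ℓ ≠ 0) (hq_real : conj q = q)
    (hL : IsConjAntiHom stL) (hM : IsConjAntiHom stM)
    (hLv : LStarVals q ℓ stL) (hMv : MStarVals q ℓ stM)
    {ρ : MAlg q ℓ →ₐ[ℂ] LAlg q ℓ ⊗[ℂ] MAlg q ℓ} (hρ : IsCoaction q ℓ ρ) :
    ρ ∘ stM = TensorProduct.map hL.toStarLinearMap hM.toStarLinearMap ∘ ρ :=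
  RingQuot.conjAntiHom_ext (hM.algHom_comp ρ) ((hL.tensorMap hM).comp_algHom ρ)
    (hρ.map_star_tgen hq hℓ hq_real hL hM hLv hMv)

end Coaction

/-- For nonzero real `q` and `ℓ` of modulus one: (i) there is a unique star structure
`★ₑ` on `M^{ℓ,q}` with `t₁₁^★ = −q⁻¹ℓ·t₂₂`, `t₁₂^★ = t₂₁`, `t₂₁^★ = t₁₂`,
`t₂₂^★ = −qℓ·t₁₁`; (ii) there is a unique star structure `★ₑ⊕★ₑ` on `L_{q,ℓ}` with
the Euclidean values on both sectors; (iii) the coaction `ρ` intertwines them: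
`ρ ∘ ★ₑ = ((★ₑ⊕★ₑ) ⊗ ★ₑ) ∘ ρ`.  (The real q-linked Euclidean space as a quantum
homogeneous space for `SO_q^ℓ(4)`.) -/
theorem euclidean_real_form (q : ℝ) (ℓ : ℂ) (hq : q ≠ 0) (hℓ : ‖ℓ‖ = 1) :
    (∃! st : MAlg ((q : ℂ)) ℓ → MAlg ((q : ℂ)) ℓ, IsStar st ∧ MStarVals ((q : ℂ)) ℓ st) ∧
    (∃! st : LAlg ((q : ℂ)) ℓ → LAlg ((q : ℂ)) ℓ, IsStar st ∧ LStarVals ((q : ℂ)) ℓ st) ∧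
    (∀ (stM : MAlg ((q : ℂ)) ℓ → MAlg ((q : ℂ)) ℓ) (stL : LAlg ((q : ℂ)) ℓ → LAlg ((q : ℂ)) ℓ)
        (ρ : MAlg ((q : ℂ)) ℓ →ₐ[ℂ] (LAlg ((q : ℂ)) ℓ ⊗[ℂ] MAlg ((q : ℂ)) ℓ)),
      IsStar stM → MStarVals ((q : ℂ)) ℓ stM → IsStar stL → LStarVals ((q : ℂ)) ℓ stL →
      IsCoaction ((q : ℂ)) ℓ ρ →
        ∃ T : (LAlg ((q : ℂ)) ℓ ⊗[ℂ] MAlg ((q : ℂ)) ℓ) → (LAlg ((q : ℂ)) ℓ ⊗[ℂ] MAlg ((q : ℂ)) ℓ),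
          (∀ u v, T (u + v) = T u + T v) ∧
          (∀ (x : LAlg ((q : ℂ)) ℓ) (y : MAlg ((q : ℂ)) ℓ),
            T (x ⊗ₜ[ℂ] y) = stL x ⊗ₜ[ℂ] stM y) ∧
          (∀ x : MAlg ((q : ℂ)) ℓ, ρ (stM x) = T (ρ x))) := by
  have hq₀ : (q : ℂ) ≠ 0 := Complex.ofReal_ne_zero.mpr hq
  have hℓ₀ : ℓ ≠ 0 := norm_ne_zero_iff.mp (hℓ ▸ one_ne_zero)
  have hq_real : conj (q : ℂ) = q := Complex.conj_ofReal q
  have hℓ_unit : conj ℓ = ℓ⁻¹ := (Complex.inv_eq_conj hℓ).symm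
  refine ⟨MAlg.existsUnique_isStar_mStarVals hq₀ hℓ₀ hq_real hℓ_unit,
    LAlg.existsUnique_isStar_lStarVals hq₀ hℓ₀ hq_real hℓ_unit,
    fun stM stL ρ hM hMv hL hLv hρ => ?_⟩
  exact ⟨TensorProduct.map hL.isConjAntiHom.toStarLinearMap hM.isConjAntiHom.toStarLinearMap,
    map_add _, fun _ _ => rfl,
    congrFun (hρ.comp_star hq₀ hℓ₀ hq_real hL.isConjAntiHom hM.isConjAntiHom hLv hMv)⟩
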